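/- Let H ∈ F_{q^m}^{(n−k)×n} be a parity-check matrix of a linear rank-metric code with minimum rank distance d, and let B' ∈ F_q^{n×s} be a matrix over the subfield with rank s ≤ d−1. Then the matrix H·B' ∈ F_{q^m}^{(n−k)×s} has F_{q^m}-rank s. -/

import Mathlib

open Matrix

noncomputable def extV {K L : Type} [Field K] [Field L] [Algebra K L]
    {m n : ℕ} (γ : Module.Basis (Fin m) K L) (v : Fin n → L) : Matrix (Fin m) (Fin n) K :=
  Matrix.of fun i j => γ.repr (v j) i

/-!
If `B' *ᵥ x` (with `B'` lifted to `L`) is a codeword, its expansion over `K` is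
`extV γ x * B'ᵀ`, of rank at most `s < d`; so it is the zero codeword. Since the columns of
`B'` stay linearly independent over `L`, this forces `x = 0`: `H * B'` has trivial kernel.
-/

namespace Matrix

theorem rank_eq_card_width_iff_mulVec_injective {R m n : Type*} [Field R] [Fintype n]
    (M : Matrix m n R) :
    M.rank = Fintype.card n ↔ Function.Injective M.mulVec := by
  rw [rank_eq_finrank_span_cols, mulVec_injective_iff,
    linearIndependent_iff_card_eq_finrank_span, Set.finrank, eq_comm]

theorem mulVec_map_algebraMap_injective {K L m n : Type*} [Field K] [Field L] [Algebra K L]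
    [Finite m] [Fintype n] {M : Matrix m n K} (hM : Function.Injective M.mulVec) :
    Function.Injective (M.map (algebraMap K L)).mulVec := by
  rw [mulVec_injective_iff] at hM ⊢
  exact linearIndependent_algebraMap_comp_iff.mpr hM

end Matrix

section extV

variable {K L : Type} [Field K] [Field L] [Algebra K L] {m n s : ℕ}
  (γ : Module.Basis (Fin m) K L)

theorem extV_map_algebraMap_mulVec (B' : Matrix (Fin n) (Fin s) K) (x : Fin s → L) :
    extV γ (B'.map (algebraMap K L) *ᵥ x) = extV γ x * B'ᵀ := by
  ext i j
  simp only [extV, of_apply, mul_apply, transpose_apply, mulVec, dotProduct, map_apply,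
    ← Algebra.smul_def, map_sum, map_smul, Finsupp.coe_finsetSum, Finset.sum_apply,
    Finsupp.smul_apply, smul_eq_mul]
  exact Finset.sum_congr rfl fun _ _ => mul_comm _ _

theorem rank_extV_map_algebraMap_mulVec_le (B' : Matrix (Fin n) (Fin s) K) (x : Fin s → L) :
    (extV γ (B'.map (algebraMap K L) *ᵥ x)).rank ≤ s := by
  rw [extV_map_algebraMap_mulVec]
  exact (rank_mul_le_left _ _).trans (rank_le_width _)

end extV

theorem rank_H_mul_subfield_matrix_general {m n k d s : ℕ} (K L : Type) [Field K]
    [Field L] [Algebra K L]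
    (γ : Module.Basis (Fin m) K L)
    (H : Matrix (Fin (n - k)) (Fin n) L)
    (hd : ∀ v : Fin n → L, H.mulVec v = 0 → v ≠ 0 → d ≤ (extV γ v).rank)
    (B' : Matrix (Fin n) (Fin s) K) (hB' : B'.rank = s) (hs : s ≤ d - 1) :
    (H * B'.map (algebraMap K L)).rank = s := by
  have hB : Function.Injective (B'.map (algebraMap K L)).mulVec :=
    mulVec_map_algebraMap_injective <| by
      simpa using (rank_eq_card_width_iff_mulVec_injective B').mp (by simpa using hB')
  suffices Function.Injective (H * B'.map (algebraMap K L)).mulVecLin by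
    simpa using (rank_eq_card_width_iff_mulVec_injective _).mpr this
  rw [← LinearMap.ker_eq_bot, ker_mulVecLin_eq_bot_iff]
  intro x hx
  obtain rfl | hs_pos := s.eq_zero_or_pos
  · exact Subsingleton.elim x 0
  rw [← mulVec_mulVec] at hx
  have hcodeword_zero : B'.map (algebraMap K L) *ᵥ x = 0 := by
    by_contra hne
    have := (hd _ hx hne).trans (rank_extV_map_algebraMap_mulVec_le γ B' x)
    omega
  exact hB (hcodeword_zero.trans (mulVec_zero _).symm)

/-- let `H` be a full-rank parity-check matrix of a linear `[n,k,d]` rank-metric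
code over `F_{q^m}` (minimum rank distance `d`), and let `B' ∈ F_q^{n×s}` have rank
`s ≤ d-1`. Then `H·B' ∈ F_{q^m}^{(n-k)×s}` has `F_{q^m}`-rank `s`. -/
theorem rank_H_mul_subfield_matrix {q m n k d s : ℕ} (K L : Type) [Field K] [Fintype K]
    [Field L] [Fintype L] [Algebra K L] (hK : Fintype.card K = q) (hL : Fintype.card L = q ^ m)
    (γ : Module.Basis (Fin m) K L)
    (H : Matrix (Fin (n - k)) (Fin n) L) (hH : H.rank = n - k)
    (hd : ∀ v : Fin n → L, H.mulVec v = 0 → v ≠ 0 → d ≤ (extV γ v).rank)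
    (hd' : ∃ v : Fin n → L, H.mulVec v = 0 ∧ v ≠ 0 ∧ (extV γ v).rank = d)
    (B' : Matrix (Fin n) (Fin s) K) (hB' : B'.rank = s) (hs : s ≤ d - 1) :
    (H * B'.map (algebraMap K L)).rank = s :=
  rank_H_mul_subfield_matrix_general K L γ H hd B' hB' hs
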